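/- Let ρ be a density matrix on ℂ^d⊗ℂ^d with reduced states ρ_a, ρ_b and cross-covariance block X_ρ in the canonical operator bases, and let r ≥ 1. If ρ violates the purity criterion, i.e. tr(ρ_a²) + tr(ρ_b²) + 2 tr|X_ρ| > 2r, then it also violates the stronger criterion: tr|X_ρ| > r − 1 and (tr|X_ρ| − (r−1))² > (1 − tr(ρ_a²)) (1 − tr(ρ_b²)). (Hence the criterion of the previous statement is weaker than the criterion involving the product of purity deficits.) -/

import Mathlib

/-!
With `a = 1 - tr ρ_a²`, `b = 1 - tr ρ_b²` and `t = tr|X_ρ| - (r - 1)` the hypothesis reads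
`a + b < 2t`, so both claims follow from AM–GM `ab ≤ ((a + b)/2)²` once `a, b ≥ 0`, i.e. once
the reduced states have purity at most one. They do: partial traces of a density matrix are
sums of principal submatrices, hence density matrices, and for `A ⪰ 0` the `2 × 2` principal
minors give `tr(A²) = ∑ A_ij A_ji ≤ ∑ A_ii A_jj = (tr A)²`.
-/

open Matrix Kronecker BigOperators Finset
open scoped ComplexOrder

/-- Expectation value ⟨A⟩_ρ = Re tr(ρ A). -/
noncomputable def expval {n : Type*} [Fintype n] (ρ A : Matrix n n ℂ) : ℝ :=
  ((ρ * A).trace).re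

/-- A density matrix: positive semidefinite with unit trace. -/
def IsDensityMatrix {n : Type*} [Fintype n] (ρ : Matrix n n ℂ) : Prop :=
  ρ.PosSemidef ∧ ρ.trace = 1

/-- The projector |v⟩⟨v| associated to a vector. -/
noncomputable def pureState {n : Type*} (v : n → ℂ) : Matrix n n ℂ :=
  Matrix.vecMulVec v (star v)

/-- A normalized vector. -/
def IsUnitVec {n : Type*} [Fintype n] (v : n → ℂ) : Prop :=
  ∑ i, Complex.normSq (v i) = 1

/-- The canonical Hermitian operator basis of ℂ^d, indexed by pairs (j,k):
diagonal operators for j = k, real operators for j < k, imaginary operators for j > k. -/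
noncomputable def canonG (d : ℕ) : Fin d × Fin d → Matrix (Fin d) (Fin d) ℂ := fun μ =>
  if μ.1 = μ.2 then Matrix.single μ.1 μ.1 1
  else if μ.1 < μ.2 then
    ((Real.sqrt 2 : ℂ))⁻¹ • (Matrix.single μ.1 μ.2 1 + Matrix.single μ.2 μ.1 1)
  else
    (Complex.I * ((Real.sqrt 2 : ℂ))⁻¹) •
      (Matrix.single μ.2 μ.1 1 - Matrix.single μ.1 μ.2 1)

/-- Covariance matrix of a family of observables w.r.t. a state ρ. -/
noncomputable def covMat {n K : Type*} [Fintype n] (ρ : Matrix n n ℂ)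
    (M : K → Matrix n n ℂ) : Matrix K K ℝ :=
  Matrix.of fun j k =>
    (1/2 : ℝ) * expval ρ (M j * M k + M k * M j) - expval ρ (M j) * expval ρ (M k)

/-- The local observables (g_μ ⊗ 1, 1 ⊗ g_ν) on the bipartite space. -/
noncomputable def bipObs (d : ℕ) :
    (Fin d × Fin d) ⊕ (Fin d × Fin d) → Matrix (Fin d × Fin d) (Fin d × Fin d) ℂ :=
  Sum.elim (fun μ => canonG d μ ⊗ₖ (1 : Matrix (Fin d) (Fin d) ℂ))
           (fun ν => (1 : Matrix (Fin d) (Fin d) ℂ) ⊗ₖ canonG d ν)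

/-- The full covariance matrix Γ_ρ of the canonical bipartite observables. -/
noncomputable def GammaCM (d : ℕ) (ρ : Matrix (Fin d × Fin d) (Fin d × Fin d) ℂ) :
    Matrix ((Fin d × Fin d) ⊕ (Fin d × Fin d)) ((Fin d × Fin d) ⊕ (Fin d × Fin d)) ℝ :=
  covMat ρ (bipObs d)

/-- The cross-covariance block X_ρ. -/
noncomputable def crossCov (d : ℕ) (ρ : Matrix (Fin d × Fin d) (Fin d × Fin d) ℂ) :
    Matrix (Fin d × Fin d) (Fin d × Fin d) ℝ :=
  Matrix.of fun μ ν =>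
    expval ρ (canonG d μ ⊗ₖ canonG d ν)
      - expval ρ (canonG d μ ⊗ₖ 1) * expval ρ ((1 : Matrix (Fin d) (Fin d) ℂ) ⊗ₖ canonG d ν)

/-- Reduced state on the first subsystem. -/
noncomputable def redA (d : ℕ) (ρ : Matrix (Fin d × Fin d) (Fin d × Fin d) ℂ) :
    Matrix (Fin d) (Fin d) ℂ :=
  Matrix.of fun i j => ∑ k, ρ (i, k) (j, k)

/-- Reduced state on the second subsystem. -/
noncomputable def redB (d : ℕ) (ρ : Matrix (Fin d × Fin d) (Fin d × Fin d) ℂ) :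
    Matrix (Fin d) (Fin d) ℂ :=
  Matrix.of fun i j => ∑ k, ρ (k, i) (k, j)

/-- Purity tr(σ²) (real part). -/
noncomputable def purity {n : Type*} [Fintype n] (σ : Matrix n n ℂ) : ℝ :=
  ((σ * σ).trace).re

/-- The positive semidefinite square root of a positive semidefinite matrix
(the definition of `Matrix.PosSemidef.sqrt` in the older Mathlib). -/
noncomputable def PosSemidef.sqrtOld {n 𝕜 : Type*} [Fintype n] [DecidableEq n] [RCLike 𝕜]
    {A : Matrix n n 𝕜} (hA : A.PosSemidef) : Matrix n n 𝕜 :=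
  hA.1.eigenvectorUnitary.1 * diagonal ((↑) ∘ (√·) ∘ hA.1.eigenvalues) *
  (star hA.1.eigenvectorUnitary : Matrix n n 𝕜)

/-- Trace norm of a real matrix: sum of its singular values, i.e. tr √(XᵀX). -/
noncomputable def traceNorm {n : Type*} [Fintype n] [DecidableEq n] (X : Matrix n n ℝ) : ℝ :=
  (PosSemidef.sqrtOld (Matrix.posSemidef_conjTranspose_mul_self X)).trace

/-- Schmidt rank of a pure state vector is the rank of its coefficient matrix. -/
def SchmidtRankLE (d r : ℕ) (v : Fin d × Fin d → ℂ) : Prop :=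
  (Matrix.of fun j k : Fin d => v (j, k)).rank ≤ r

/-- Schmidt number at most r. -/
def SchmidtNumberLE (d r : ℕ) (ρ : Matrix (Fin d × Fin d) (Fin d × Fin d) ℂ) : Prop :=
  ∃ (n : ℕ) (p : Fin n → ℝ) (ψ : Fin n → (Fin d × Fin d → ℂ)),
    (∀ k, 0 ≤ p k) ∧ (∑ k, p k = 1) ∧ (∀ k, IsUnitVec (ψ k)) ∧
    (∀ k, SchmidtRankLE d r (ψ k)) ∧
    ρ = ∑ k, (p k : ℂ) • pureState (ψ k)

namespace Matrix

variable {n 𝕜 : Type*} [RCLike 𝕜]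

theorem PosSemidef.mul_apply_le_mul_diag {A : Matrix n n 𝕜} (hA : A.PosSemidef) (i j : n) :
    A i j * A j i ≤ A i i * A j j := by
  have hdet := (hA.submatrix ![i, j]).det_nonneg
  rw [det_fin_two] at hdet
  simpa using hdet

theorem PosSemidef.trace_mul_self_le_trace_sq [Fintype n] {A : Matrix n n 𝕜}
    (hA : A.PosSemidef) : (A * A).trace ≤ A.trace ^ 2 := by
  rw [sq, trace, trace, Finset.sum_mul_sum]
  exact Finset.sum_le_sum fun i _ => by
    rw [diag_apply, mul_apply]
    exact Finset.sum_le_sum fun j _ => hA.mul_apply_le_mul_diag i j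

end Matrix

theorem IsDensityMatrix.purity_le_one {n : Type*} [Fintype n] {σ : Matrix n n ℂ}
    (hσ : IsDensityMatrix σ) : purity σ ≤ 1 := by
  have h := hσ.1.trace_mul_self_le_trace_sq
  rw [hσ.2, one_pow] at h
  exact (Complex.le_def.mp h).1

theorem redA_eq_sum_submatrix (d : ℕ) (ρ : Matrix (Fin d × Fin d) (Fin d × Fin d) ℂ) :
    redA d ρ = ∑ k, ρ.submatrix (·, k) (·, k) := by
  ext i j
  simp [redA, Matrix.sum_apply]

theorem redB_eq_sum_submatrix (d : ℕ) (ρ : Matrix (Fin d × Fin d) (Fin d × Fin d) ℂ) :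
    redB d ρ = ∑ k, ρ.submatrix (k, ·) (k, ·) := by
  ext i j
  simp [redB, Matrix.sum_apply]

theorem isDensityMatrix_redA {d : ℕ} {ρ : Matrix (Fin d × Fin d) (Fin d × Fin d) ℂ}
    (hρ : IsDensityMatrix ρ) : IsDensityMatrix (redA d ρ) := by
  refine ⟨?_, ?_⟩
  · rw [redA_eq_sum_submatrix]
    exact Matrix.posSemidef_sum _ fun k _ => hρ.1.submatrix _
  · rw [← hρ.2, Matrix.trace, Matrix.trace, Fintype.sum_prod_type]
    rfl

theorem isDensityMatrix_redB {d : ℕ} {ρ : Matrix (Fin d × Fin d) (Fin d × Fin d) ℂ}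
    (hρ : IsDensityMatrix ρ) : IsDensityMatrix (redB d ρ) := by
  refine ⟨?_, ?_⟩
  · rw [redB_eq_sum_submatrix]
    exact Matrix.posSemidef_sum _ fun k _ => hρ.1.submatrix _
  · rw [← hρ.2, Matrix.trace, Matrix.trace, Fintype.sum_prod_type, Finset.sum_comm]
    rfl

theorem pos_and_mul_lt_sq_of_add_lt_two_mul {a b t : ℝ} (ha : 0 ≤ a) (hb : 0 ≤ b)
    (h : a + b < 2 * t) : 0 < t ∧ a * b < t ^ 2 :=
  ⟨by linarith, by nlinarith [sq_nonneg (a - b)]⟩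

theorem purity_criterion_weaker_than_product_criterion_general
    (d r : ℕ) (ρ : Matrix (Fin d × Fin d) (Fin d × Fin d) ℂ)
    (hρ : IsDensityMatrix ρ)
    (hviol : 2 * (r : ℝ) <
      purity (redA d ρ) + purity (redB d ρ) + 2 * traceNorm (crossCov d ρ)) :
    (r : ℝ) - 1 < traceNorm (crossCov d ρ) ∧
    (1 - purity (redA d ρ)) * (1 - purity (redB d ρ)) <
      (traceNorm (crossCov d ρ) - ((r : ℝ) - 1)) ^ 2 := by
  have ha := sub_nonneg.mpr (isDensityMatrix_redA hρ).purity_le_one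
  have hb := sub_nonneg.mpr (isDensityMatrix_redB hρ).purity_le_one
  obtain ⟨hpos, hprod⟩ := pos_and_mul_lt_sq_of_add_lt_two_mul ha hb
    (t := traceNorm (crossCov d ρ) - (r - 1)) (by linarith)
  exact ⟨sub_pos.mp hpos, hprod⟩

/-- Violating the purity criterion implies violating the product criterion,
i.e. the purity criterion is weaker. -/
theorem purity_criterion_weaker_than_product_criterion
    (d r : ℕ) (hr : 1 ≤ r) (ρ : Matrix (Fin d × Fin d) (Fin d × Fin d) ℂ)
    (hρ : IsDensityMatrix ρ)
    (hviol : 2 * (r : ℝ) <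
      purity (redA d ρ) + purity (redB d ρ) + 2 * traceNorm (crossCov d ρ)) :
    (r : ℝ) - 1 < traceNorm (crossCov d ρ) ∧
    (1 - purity (redA d ρ)) * (1 - purity (redB d ρ)) <
      (traceNorm (crossCov d ρ) - ((r : ℝ) - 1)) ^ 2 :=
  purity_criterion_weaker_than_product_criterion_general d r ρ hρ hviol
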